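/- arXiv:1107.4654 — 9 statements merged into one kernel-verified Lean document; each statement's English description precedes it below -/
import Mathlib

section
/- Let ω : ℕ → S be an infinite word over a finite set S ⊆ ℤ. If there exists M₃ such that |φ_ω(n)| ≤ M₃ for all n ≥ 1, then for all factors B₁, B₂ of ω with |B₁| = |B₂| one has |∑B₁ − ∑B₂| ≤ (M₃ − 1)(max S − min S). -/
def factorSum (ω : ℕ → ℤ) (a n : ℕ) : ℤ := ∑ i ∈ Finset.range n, ω (a + i)

def phiSet (ω : ℕ → ℤ) (n : ℕ) : Set ℤ := {s | ∃ a : ℕ, factorSum ω a n = s}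

/-- Discrete intermediate value theorem with step bound `D`. -/
lemma ivt_aux (p : ℕ → ℤ) (D : ℤ) (hstep : ∀ i, |p (i + 1) - p i| ≤ D)
    (v : ℤ) : ∀ s t : ℕ, p s < v → v ≤ p t → ∃ j, v ≤ p j ∧ p j ≤ v + D - 1 := by
  have key : ∀ k s t : ℕ, s + t ≤ k → p s < v → v ≤ p t →
      ∃ j, v ≤ p j ∧ p j ≤ v + D - 1 := by
    intro k
    induction k with
    | zero =>
      intro s t hst hs ht
      have : s = 0 ∧ t = 0 := by omega
      obtain ⟨rfl, rfl⟩ := this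
      omega
    | succ k ih =>
      intro s t hst hs ht
      rcases le_or_gt s t with h | h
      · -- s ≤ t
        rcases Nat.eq_zero_or_pos t with rfl | htpos
        · have hs0 : s = 0 := by omega
          subst hs0; omega
        · obtain ⟨t', rfl⟩ : ∃ t', t = t' + 1 := ⟨t - 1, by omega⟩
          rcases lt_or_ge (p t') v with h1 | h1
          · refine ⟨t' + 1, ht, ?_⟩
            have := hstep t'
            have := abs_le.mp this
            omega
          · exact ih s t' (by omega) hs h1
      · -- t < s
        obtain ⟨s', rfl⟩ : ∃ s', s = s' + 1 := ⟨s - 1, by omega⟩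
        rcases lt_or_ge (p s') v with h1 | h1
        · exact ih s' t (by omega) h1 ht
        · refine ⟨s', h1, ?_⟩
          have := hstep s'
          have := abs_le.mp this
          omega
  intro s t hs ht
  exact key (s + t) s t le_rfl hs ht

/-- Chain lemma: if all values of a `D`-step path lie in `V`, then the distance between
any two path values is at most `(|V| - 1) * D`. -/
lemma chain_aux (p : ℕ → ℤ) (D : ℤ) (hD : 0 ≤ D) (hstep : ∀ i, |p (i + 1) - p i| ≤ D)
    (V : Finset ℤ) (hV : ∀ j, p j ∈ V) (t : ℕ) :
    ∀ s : ℕ, p s ≤ p t →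
      p t - p s ≤ (((V.filter (fun x => p s ≤ x)).card : ℤ) - 1) * D := by
  have key : ∀ k : ℕ, ∀ s : ℕ, p s ≤ p t → (p t - p s).toNat ≤ k →
      p t - p s ≤ (((V.filter (fun x => p s ≤ x)).card : ℤ) - 1) * D := by
    intro k
    induction k with
    | zero =>
      intro s hle hk
      have heq : p t = p s := by omega
      have hcard : 1 ≤ (V.filter (fun x => p s ≤ x)).card := by
        refine Finset.card_pos.mpr ⟨p s, ?_⟩
        simp [Finset.mem_filter, hV s]
      have : (0 : ℤ) ≤ (((V.filter (fun x => p s ≤ x)).card : ℤ) - 1) * D := by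
        apply mul_nonneg _ hD
        have : (1 : ℤ) ≤ ((V.filter (fun x => p s ≤ x)).card : ℤ) := by exact_mod_cast hcard
        linarith
      omega
    | succ k ih =>
      intro s hle hk
      rcases eq_or_lt_of_le hle with heq | hlt
      · have hcard : 1 ≤ (V.filter (fun x => p s ≤ x)).card := by
          refine Finset.card_pos.mpr ⟨p s, ?_⟩
          simp [Finset.mem_filter, hV s]
        have : (0 : ℤ) ≤ (((V.filter (fun x => p s ≤ x)).card : ℤ) - 1) * D := by
          apply mul_nonneg _ hD
          have : (1 : ℤ) ≤ ((V.filter (fun x => p s ≤ x)).card : ℤ) := by exact_mod_cast hcard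
          linarith
        omega
      · -- p s < p t
        obtain ⟨j, hj1, hj2⟩ := ivt_aux p D hstep (p s + 1) s t (by omega) (by omega)
        rcases le_or_gt (p t) (p j) with hcase | hcase
        · -- p t ≤ p j ≤ p s + D, so p t - p s ≤ D; card ≥ 2
          have hmem1 : p s ∈ V.filter (fun x => p s ≤ x) := by
            simp [Finset.mem_filter, hV s]
          have hmem2 : p j ∈ V.filter (fun x => p s ≤ x) := by
            simp only [Finset.mem_filter]
            exact ⟨hV j, by omega⟩
          have hcard : 2 ≤ (V.filter (fun x => p s ≤ x)).card := by
            have : ({p s, p j} : Finset ℤ) ⊆ V.filter (fun x => p s ≤ x) := by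
              intro x hx
              simp only [Finset.mem_insert, Finset.mem_singleton] at hx
              rcases hx with rfl | rfl <;> assumption
            have h2 : ({p s, p j} : Finset ℤ).card = 2 := by
              rw [Finset.card_insert_of_notMem (by simp; omega), Finset.card_singleton]
            calc 2 = ({p s, p j} : Finset ℤ).card := h2.symm
              _ ≤ _ := Finset.card_le_card this
          have hcast : (2 : ℤ) ≤ ((V.filter (fun x => p s ≤ x)).card : ℤ) := by
            exact_mod_cast hcard
          have : (1 : ℤ) * D ≤ (((V.filter (fun x => p s ≤ x)).card : ℤ) - 1) * D :=
            mul_le_mul_of_nonneg_right (by linarith) hD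
          omega
        · -- p j < p t : recurse from j
          have hjle : p j ≤ p t := le_of_lt hcase
          have hkk : (p t - p j).toNat ≤ k := by omega
          have IH := ih j hjle hkk
          -- filter from j is a strict subset (missing p s)
          have hsub : insert (p s) (V.filter (fun x => p j ≤ x)) ⊆
              V.filter (fun x => p s ≤ x) := by
            intro x hx
            simp only [Finset.mem_insert, Finset.mem_filter] at hx ⊢
            rcases hx with rfl | ⟨h1, h2⟩
            · exact ⟨hV s, le_rfl⟩
            · exact ⟨h1, by omega⟩
          have hnot : p s ∉ V.filter (fun x => p j ≤ x) := by
            simp only [Finset.mem_filter, not_and]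
            intro _
            omega
          have hcard : (V.filter (fun x => p j ≤ x)).card + 1 ≤
              (V.filter (fun x => p s ≤ x)).card := by
            calc (V.filter (fun x => p j ≤ x)).card + 1
                = (insert (p s) (V.filter (fun x => p j ≤ x))).card := by
                  rw [Finset.card_insert_of_notMem hnot]
              _ ≤ _ := Finset.card_le_card hsub
          have hcast : ((V.filter (fun x => p j ≤ x)).card : ℤ) + 1 ≤
              ((V.filter (fun x => p s ≤ x)).card : ℤ) := by exact_mod_cast hcard
          have hmul : ((V.filter (fun x => p j ≤ x)).card : ℤ) * D ≤
              (((V.filter (fun x => p s ≤ x)).card : ℤ) - 1) * D :=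
            mul_le_mul_of_nonneg_right (by linarith) hD
          have : p t - p s = (p t - p j) + (p j - p s) := by ring
          have hjD : p j - p s ≤ D := by omega
          nlinarith [IH, hmul]
  intro s hle
  exact key (p t - p s).toNat s hle le_rfl

lemma factorSum_step (ω : ℕ → ℤ) (n i : ℕ) :
    factorSum ω (i + 1) n - factorSum ω i n = ω (i + n) - ω i := by
  have h1 : factorSum ω i (n + 1) = factorSum ω i n + ω (i + n) :=
    Finset.sum_range_succ _ _
  have h2 : factorSum ω i (n + 1) = ω i + factorSum ω (i + 1) n := by
    unfold factorSum
    rw [Finset.sum_range_succ']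
    simp only [Nat.add_zero]
    rw [add_comm]
    congr 1
    apply Finset.sum_congr rfl
    intro x _
    congr 1
    omega
  omega

/-- If `|φ_ω(n)| ≤ M₃` for all `n ≥ 1`, then any two equal-length factors have sums
differing by at most `(M₃ - 1)(max S - min S)`. -/
theorem stmt2 (S : Finset ℤ) (hS : S.Nonempty) (ω : ℕ → ℤ) (hω : ∀ n, ω n ∈ S)
    (M₃ : ℕ) (hφ : ∀ n : ℕ, 1 ≤ n → (phiSet ω n).ncard ≤ M₃) :
    ∀ a b n : ℕ,
      |factorSum ω a n - factorSum ω b n| ≤ ((M₃ : ℤ) - 1) * (S.max' hS - S.min' hS) := by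
  set D : ℤ := S.max' hS - S.min' hS with hDdef
  have hD : 0 ≤ D := by
    have := S.min'_le _ (S.max'_mem hS)
    omega
  -- M₃ ≥ 1
  have hM : 1 ≤ M₃ := by
    have hfin : (phiSet ω 1).Finite := by
      apply Set.Finite.subset S.finite_toSet
      rintro x ⟨a, ha⟩
      have : factorSum ω a 1 = ω a := by simp [factorSum]
      rw [this] at ha
      simpa [← ha] using hω a
    have hne : (phiSet ω 1).Nonempty := ⟨ω 0, 0, by simp [factorSum]⟩
    have h1 : 1 ≤ (phiSet ω 1).ncard := by
      have := (Set.ncard_pos hfin).mpr hne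
      omega
    have := hφ 1 le_rfl
    omega
  have hMcast : (1 : ℤ) ≤ (M₃ : ℤ) := by exact_mod_cast hM
  intro a b n
  rcases Nat.eq_zero_or_pos n with rfl | hn
  · simp [factorSum]
    exact mul_nonneg (by linarith) hD
  -- n ≥ 1 : the set of factor sums is finite
  have hfin : (phiSet ω n).Finite := by
    apply Set.Finite.subset (Set.finite_Icc ((n : ℤ) * S.min' hS) ((n : ℤ) * S.max' hS))
    rintro x ⟨c, rfl⟩
    constructor
    · calc (n : ℤ) * S.min' hS = ∑ i ∈ Finset.range n, S.min' hS := by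
            rw [Finset.sum_const, Finset.card_range]; ring
        _ ≤ factorSum ω c n :=
            Finset.sum_le_sum (fun i _ => S.min'_le _ (hω _))
    · calc factorSum ω c n ≤ ∑ i ∈ Finset.range n, S.max' hS :=
            Finset.sum_le_sum (fun i _ => S.le_max' _ (hω _))
        _ = (n : ℤ) * S.max' hS := by rw [Finset.sum_const, Finset.card_range]; ring
  set V : Finset ℤ := hfin.toFinset with hVdef
  have hVcard : (V.card : ℤ) ≤ (M₃ : ℤ) := by
    have h1 : V.card = (phiSet ω n).ncard := by
      rw [hVdef, Set.ncard_eq_toFinset_card _ hfin]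
    have := hφ n hn
    omega
  set p : ℕ → ℤ := fun i => factorSum ω i n with hpdef
  have hstep : ∀ i, |p (i + 1) - p i| ≤ D := by
    intro i
    have h1 : p (i + 1) - p i = ω (i + n) - ω i := factorSum_step ω n i
    rw [h1]
    have hx1 := S.le_max' _ (hω (i + n))
    have hx2 := S.min'_le _ (hω (i + n))
    have hy1 := S.le_max' _ (hω i)
    have hy2 := S.min'_le _ (hω i)
    rw [abs_le]
    omega
  have hV : ∀ j, p j ∈ V := by
    intro j
    rw [hVdef, Set.Finite.mem_toFinset]
    exact ⟨j, rfl⟩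
  -- generic bound for ordered pair
  have main : ∀ s t : ℕ, p s ≤ p t → p t - p s ≤ ((M₃ : ℤ) - 1) * D := by
    intro s t hle
    have h1 := chain_aux p D hD hstep V hV t s hle
    have hsub : V.filter (fun x => p s ≤ x) ⊆ V := Finset.filter_subset _ _
    have h2 : ((V.filter (fun x => p s ≤ x)).card : ℤ) ≤ (V.card : ℤ) := by
      exact_mod_cast Finset.card_le_card hsub
    have h3 : (((V.filter (fun x => p s ≤ x)).card : ℤ) - 1) * D ≤ ((M₃ : ℤ) - 1) * D :=
      mul_le_mul_of_nonneg_right (by omega) hD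
    linarith
  rcases le_total (factorSum ω a n) (factorSum ω b n) with h | h
  · rw [abs_sub_comm, abs_of_nonneg (by omega)]
    exact main a b h
  · rw [abs_of_nonneg (by omega)]
    exact main b a h
end

section
/- Let ω : ℕ → S be an infinite word over a finite set S ⊆ ℤ. The following are equivalent: (1) there is M₁ bounding |∑B₁ − ∑B₂| over all adjacent factor pairs B₁B₂ with |B₁| = |B₂|; (2) there is M₂ bounding |∑B₁ − ∑B₂| over all factor pairs with |B₁| = |B₂|; (3) there is M₃ with |φ_ω(n)| ≤ M₃ for all n ≥ 1. -/
/-! ### Auxiliary lemmas -/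

lemma fs_split (ω : ℕ → ℤ) (a m k : ℕ) :
    factorSum ω a (m + k) = factorSum ω a m + factorSum ω (a + m) k := by
  unfold factorSum
  rw [Finset.sum_range_add]
  congr 1
  exact Finset.sum_congr rfl fun i _ => by rw [add_assoc]

lemma fs_bound (ω : ℕ → ℤ) (C : ℤ) (hC : ∀ i, |ω i| ≤ C) (a n : ℕ) :
    |factorSum ω a n| ≤ n * C := by
  calc |factorSum ω a n| ≤ ∑ i ∈ Finset.range n, |ω (a + i)| :=
        Finset.abs_sum_le_sum_abs _ _
    _ ≤ ∑ i ∈ Finset.range n, C := Finset.sum_le_sum fun i _ => hC _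
    _ = n * C := by simp [mul_comm]

lemma fs_offset (ω : ℕ → ℤ) (a d N : ℕ) :
    factorSum ω a N - factorSum ω (a + d) N
      = factorSum ω a d - factorSum ω (a + N) d := by
  have h1 := fs_split ω a d N
  have h2 := fs_split ω a N d
  rw [add_comm d N] at h1
  linarith

lemma fs_pow (ω : ℕ → ℤ) (M : ℤ)
    (h : ∀ a n : ℕ, |factorSum ω a n - factorSum ω (a + n) n| ≤ M)
    (k a n : ℕ) :
    |factorSum ω a (2 ^ k * n) - 2 ^ k * factorSum ω a n| ≤ (2 ^ k - 1) * M := by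
  induction k generalizing a with
  | zero => simp
  | succ k ih =>
    have hsp : factorSum ω a (2 ^ (k+1) * n)
        = factorSum ω a (2 ^ k * n) + factorSum ω (a + 2 ^ k * n) (2 ^ k * n) := by
      rw [show 2 ^ (k+1) * n = 2 ^ k * n + 2 ^ k * n by ring, fs_split]
    have e : factorSum ω a (2 ^ (k+1) * n) - 2 ^ (k+1) * factorSum ω a n
        = (factorSum ω a (2 ^ k * n) - 2 ^ k * factorSum ω a n)
          + (factorSum ω a (2 ^ k * n) - 2 ^ k * factorSum ω a n)
          + (factorSum ω (a + 2 ^ k * n) (2 ^ k * n) - factorSum ω a (2 ^ k * n)) := by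
      rw [hsp]; ring
    have h2 : |factorSum ω (a + 2 ^ k * n) (2 ^ k * n) - factorSum ω a (2 ^ k * n)| ≤ M := by
      rw [abs_sub_comm]; exact h a (2 ^ k * n)
    have h1 := ih a
    calc |factorSum ω a (2 ^ (k+1) * n) - 2 ^ (k+1) * factorSum ω a n|
        ≤ |factorSum ω a (2 ^ k * n) - 2 ^ k * factorSum ω a n|
          + |factorSum ω a (2 ^ k * n) - 2 ^ k * factorSum ω a n|
          + |factorSum ω (a + 2 ^ k * n) (2 ^ k * n) - factorSum ω a (2 ^ k * n)| := by
          rw [e]; exact abs_add_three _ _ _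
      _ ≤ (2 ^ k - 1) * M + (2 ^ k - 1) * M + M := by linarith
      _ = (2 ^ (k+1) - 1) * M := by ring

lemma adj_bound (ω : ℕ → ℤ) (C : ℕ) (hC : ∀ i, |ω i| ≤ (C : ℤ)) (M : ℤ)
    (h : ∀ a n : ℕ, |factorSum ω a n - factorSum ω (a + n) n| ≤ M)
    (a d n : ℕ) : |factorSum ω a n - factorSum ω (a + d) n| ≤ 2 * M := by
  have hM : 0 ≤ M := le_trans (abs_nonneg _) (h 0 0)
  by_contra hlt
  push_neg at hlt
  have hX : 2 * M + 1 ≤ |factorSum ω a n - factorSum ω (a + d) n| := hlt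
  set K := 2 * d * C with hKdef
  have hK : ((2 * d * C : ℕ) : ℤ) < 2 ^ K := by
    have := Nat.lt_two_pow_self (n := K)
    exact_mod_cast this
  set Y := 2 ^ K * n with hY
  have h1 := fs_pow ω M h K a n
  have h2 := fs_pow ω M h K (a + d) n
  have h3 := fs_offset ω a d Y
  have h4 := fs_bound ω (C : ℤ) hC a d
  have h5 := fs_bound ω (C : ℤ) hC (a + Y) d
  have e : (2 : ℤ) ^ K * (factorSum ω a n - factorSum ω (a + d) n)
      = (2 ^ K * factorSum ω a n - factorSum ω a Y)
        + (factorSum ω a d - factorSum ω (a + Y) d)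
        + (factorSum ω (a + d) Y - 2 ^ K * factorSum ω (a + d) n) := by
    rw [← h3]; ring
  have habs : (2 : ℤ) ^ K * |factorSum ω a n - factorSum ω (a + d) n|
      = |(2 : ℤ) ^ K * (factorSum ω a n - factorSum ω (a + d) n)| := by
    rw [abs_mul, abs_pow]; norm_num
  have hb : |(2 : ℤ) ^ K * (factorSum ω a n - factorSum ω (a + d) n)|
      ≤ (2 ^ K - 1) * M + (d * C + d * C) + (2 ^ K - 1) * M := by
    rw [e]
    refine le_trans (abs_add_three _ _ _) ?_
    refine add_le_add (add_le_add ?_ ?_) ?_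
    · rw [abs_sub_comm]; exact h1
    · exact le_trans (abs_sub _ _) (by linarith)
    · exact h2
  have hp : (0 : ℤ) < 2 ^ K := by positivity
  push_cast at hK
  linarith [mul_le_mul_of_nonneg_left hX (le_of_lt hp), habs, hb, hK]

lemma ivt_up (g : ℕ → ℤ) (s : ℤ) (hstep : ∀ i, |g (i + 1) - g i| ≤ s)
    (a b : ℕ) (hab : a ≤ b) (t : ℤ) (h1 : g a ≤ t) (h2 : t ≤ g b) :
    ∃ k, t ≤ g k ∧ g k ≤ t + s := by
  have hs : 0 ≤ s := le_trans (abs_nonneg _) (hstep 0)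
  classical
  have hP : ∃ m, t ≤ g (a + m) := ⟨b - a, by rwa [Nat.add_sub_cancel' hab]⟩
  have hspec : t ≤ g (a + Nat.find hP) := Nat.find_spec hP
  rcases Nat.eq_zero_or_pos (Nat.find hP) with h0 | h0
  · rw [h0, Nat.add_zero] at hspec
    have : g a = t := le_antisymm h1 hspec
    exact ⟨a, le_of_eq this.symm, by linarith⟩
  · have hmin := Nat.find_min hP (Nat.sub_lt h0 one_pos)
    push_neg at hmin
    have hst := hstep (a + (Nat.find hP - 1))
    have he : a + (Nat.find hP - 1) + 1 = a + Nat.find hP := by omega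
    rw [he, abs_le] at hst
    exact ⟨a + Nat.find hP, hspec, by linarith [hst.2]⟩

lemma ivt_abs (g : ℕ → ℤ) (s : ℤ) (hstep : ∀ i, |g (i + 1) - g i| ≤ s)
    (a b : ℕ) (t : ℤ) (h1 : g a ≤ t) (h2 : t ≤ g b) :
    ∃ k, |g k - t| ≤ s := by
  have hs : 0 ≤ s := le_trans (abs_nonneg _) (hstep 0)
  rcases le_total a b with hab | hab
  · obtain ⟨k, hk1, hk2⟩ := ivt_up g s hstep a b hab t h1 h2
    exact ⟨k, by rw [abs_le]; constructor <;> linarith⟩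
  · have hstep' : ∀ i, |(-g (i + 1)) - (-g i)| ≤ s := fun i => by
      have : (-g (i + 1)) - (-g i) = -(g (i + 1) - g i) := by ring
      rw [this, abs_neg]; exact hstep i
    obtain ⟨k, hk1, hk2⟩ := ivt_up (fun i => -g i) s hstep' b a hab (-t)
      (by simpa using neg_le_neg h2) (by simpa using neg_le_neg h1)
    have hk1' : -t ≤ -g k := hk1
    have hk2' : -g k ≤ -t + s := hk2
    exact ⟨k, by rw [abs_le]; constructor <;> linarith⟩

lemma fs_step (ω : ℕ → ℤ) (C : ℕ) (hC : ∀ i, |ω i| ≤ (C : ℤ)) (n i : ℕ) :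
    |factorSum ω (i + 1) n - factorSum ω i n| ≤ 2 * C := by
  have h1 := fs_split ω i 1 n
  have h2 := fs_split ω i n 1
  rw [add_comm 1 n] at h1
  have e1 : factorSum ω i 1 = ω i := by simp [factorSum]
  have e2 : factorSum ω (i + n) 1 = ω (i + n) := by simp [factorSum]
  have e : factorSum ω (i + 1) n - factorSum ω i n = ω (i + n) - ω i := by
    rw [← e1, ← e2]; linarith
  rw [e]
  calc |ω (i + n) - ω i| ≤ |ω (i + n)| + |ω i| := abs_sub _ _
    _ ≤ C + C := add_le_add (hC _) (hC _)
    _ = 2 * C := by ring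

lemma three_to_two (ω : ℕ → ℤ) (C : ℕ) (hC : ∀ i, |ω i| ≤ (C : ℤ)) (M₃ : ℕ)
    (h3 : ∀ n : ℕ, 1 ≤ n → (phiSet ω n).ncard ≤ M₃) (a b n : ℕ) :
    |factorSum ω a n - factorSum ω b n| ≤ (((4 * C + 1) * M₃ + 2 * C : ℕ) : ℤ) := by
  classical
  rcases Nat.eq_zero_or_pos n with rfl | hn
  · simp only [factorSum, Finset.range_zero, Finset.sum_empty, sub_zero, abs_zero]
    positivity
  set s : ℤ := 2 * C with hsdef
  have hs : 0 ≤ s := by positivity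
  have hfin : (phiSet ω n).Finite := by
    apply Set.Finite.subset (Set.finite_Icc (-(n * C : ℤ)) (n * C : ℤ))
    rintro x ⟨c, rfl⟩
    have := fs_bound ω (C : ℤ) hC c n
    rw [abs_le] at this
    exact Set.mem_Icc.mpr ⟨by linarith [this.1], this.2⟩
  have key : ∀ p q : ℕ, factorSum ω p n ≤ factorSum ω q n →
      factorSum ω q n - factorSum ω p n ≤ (2 * s + 1) * M₃ + s := by
    intro p q hpq
    by_contra hgt
    push_neg at hgt
    have H : ∀ j : ℕ, j ≤ M₃ → ∃ c, c ∈ phiSet ω n ∧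
        |c - (factorSum ω p n + (2 * s + 1) * j + s)| ≤ s := by
      intro j hj
      have hj1 : factorSum ω p n ≤ factorSum ω p n + (2 * s + 1) * j + s := by
        have : (0:ℤ) ≤ (2 * s + 1) * j := by positivity
        linarith
      have hj2 : factorSum ω p n + (2 * s + 1) * j + s ≤ factorSum ω q n := by
        have hjm : (j : ℤ) ≤ M₃ := by exact_mod_cast hj
        have : (2 * s + 1) * (j : ℤ) ≤ (2 * s + 1) * M₃ :=
          mul_le_mul_of_nonneg_left hjm (by linarith)
        linarith
      obtain ⟨k, hk⟩ := ivt_abs (fun i => factorSum ω i n) s (fs_step ω C hC n)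
        p q _ hj1 hj2
      exact ⟨factorSum ω k n, ⟨k, rfl⟩, hk⟩
    let F : ℕ → ℤ := fun j => if h : j ≤ M₃ then (H j h).choose else 0
    have hF : ∀ j, (hj : j ≤ M₃) → F j ∈ phiSet ω n ∧
        |F j - (factorSum ω p n + (2 * s + 1) * j + s)| ≤ s := by
      intro j hj
      simp only [F, dif_pos hj]
      exact (H j hj).choose_spec
    have hinj : Set.InjOn F ↑(Finset.range (M₃ + 1)) := by
      intro i hi j hj hij
      simp only [Finset.coe_range, Set.mem_Iio] at hi hj
      have hi' : i ≤ M₃ := by omega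
      have hj' : j ≤ M₃ := by omega
      have h1 := (hF i hi').2
      have h2 := (hF j hj').2
      rw [hij] at h1
      by_contra hne
      have hd : (1 : ℤ) ≤ |(i : ℤ) - j| := by
        have : (i : ℤ) ≠ j := by exact_mod_cast hne
        have := abs_pos.mpr (sub_ne_zero.mpr this)
        omega
      have : |((factorSum ω p n + (2 * s + 1) * j + s) : ℤ)
          - (factorSum ω p n + (2 * s + 1) * i + s)| ≤ 2 * s := by
        calc |(factorSum ω p n + (2 * s + 1) * j + s)
            - (factorSum ω p n + (2 * s + 1) * i + s)|
            = |(F j - (factorSum ω p n + (2 * s + 1) * i + s))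
              - (F j - (factorSum ω p n + (2 * s + 1) * j + s))| := by ring_nf
          _ ≤ |F j - (factorSum ω p n + (2 * s + 1) * i + s)|
              + |F j - (factorSum ω p n + (2 * s + 1) * j + s)| := abs_sub _ _
          _ ≤ s + s := add_le_add h1 h2
          _ = 2 * s := by ring
      have he : (factorSum ω p n + (2 * s + 1) * j + s)
          - (factorSum ω p n + (2 * s + 1) * i + s) = (2 * s + 1) * ((j:ℤ) - i) := by ring
      rw [he, abs_mul, abs_of_nonneg (by linarith : (0:ℤ) ≤ 2 * s + 1)] at this
      rw [abs_sub_comm] at hd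
      nlinarith
    have hsub : ↑(Finset.image F (Finset.range (M₃ + 1))) ⊆ phiSet ω n := by
      intro x hx
      simp only [Finset.coe_image, Set.mem_image, Finset.mem_coe, Finset.mem_range] at hx
      obtain ⟨j, hj, rfl⟩ := hx
      exact (hF j (by omega)).1
    have hcard : (Finset.image F (Finset.range (M₃ + 1))).card = M₃ + 1 := by
      rw [Finset.card_image_of_injOn hinj, Finset.card_range]
    have := Set.ncard_le_ncard hsub hfin
    rw [Set.ncard_coe_finset, hcard] at this
    have := h3 n hn
    omega
  have hb : ((((4 * C + 1) * M₃ + 2 * C : ℕ)) : ℤ) = (2 * s + 1) * M₃ + s := by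
    push_cast [hsdef]; ring
  rw [hb, abs_sub_le_iff]
  rcases le_total (factorSum ω a n) (factorSum ω b n) with h | h
  · have := key a b h
    constructor <;> linarith
  · have := key b a h
    constructor <;> linarith

/-- The three conditions defining bounded additive complexity are equivalent. -/
theorem stmt3 (S : Finset ℤ) (hS : S.Nonempty) (ω : ℕ → ℤ) (hω : ∀ n, ω n ∈ S) :
    ((∃ M₁ : ℕ, ∀ a n : ℕ, |factorSum ω a n - factorSum ω (a + n) n| ≤ (M₁ : ℤ)) ↔
      (∃ M₂ : ℕ, ∀ a b n : ℕ, |factorSum ω a n - factorSum ω b n| ≤ (M₂ : ℤ))) ∧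
    ((∃ M₂ : ℕ, ∀ a b n : ℕ, |factorSum ω a n - factorSum ω b n| ≤ (M₂ : ℤ)) ↔
      (∃ M₃ : ℕ, ∀ n : ℕ, 1 ≤ n → (phiSet ω n).ncard ≤ M₃)) := by
  set C : ℕ := S.sup' hS (fun z => z.natAbs) with hCdef
  have hC : ∀ i, |ω i| ≤ (C : ℤ) := by
    intro i
    rw [Int.abs_eq_natAbs]
    exact_mod_cast Finset.le_sup' (fun z => z.natAbs) (hω i)
  refine ⟨⟨?_, ?_⟩, ⟨?_, ?_⟩⟩
  · rintro ⟨M₁, h1⟩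
    refine ⟨2 * M₁, fun a b n => ?_⟩
    push_cast
    rcases le_total a b with hab | hab
    · have := adj_bound ω C hC (M₁ : ℤ) h1 a (b - a) n
      rwa [Nat.add_sub_cancel' hab] at this
    · have := adj_bound ω C hC (M₁ : ℤ) h1 b (a - b) n
      rw [Nat.add_sub_cancel' hab] at this
      rwa [abs_sub_comm] at this
  · rintro ⟨M₂, h2⟩
    exact ⟨M₂, fun a n => h2 a (a + n) n⟩
  · rintro ⟨M₂, h2⟩
    refine ⟨2 * M₂ + 1, fun n hn => ?_⟩
    have hsub : phiSet ω n ⊆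
        ↑(Finset.Icc (factorSum ω 0 n - M₂) (factorSum ω 0 n + M₂)) := by
      rintro x ⟨c, rfl⟩
      have := h2 c 0 n
      rw [abs_le] at this
      simp only [Finset.coe_Icc, Set.mem_Icc]
      constructor <;> linarith [this.1, this.2]
    have hle := Set.ncard_le_ncard hsub (Finset.finite_toSet _)
    rw [Set.ncard_coe_finset] at hle
    have hcard : (Finset.Icc (factorSum ω 0 n - M₂) (factorSum ω 0 n + M₂)).card
        = 2 * M₂ + 1 := by
      rw [Int.card_Icc]
      omega
    omega
  · rintro ⟨M₃, h3⟩
    exact ⟨(4 * C + 1) * M₃ + 2 * C, fun a b n => three_to_two ω C hC M₃ h3 a b n⟩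
end

section
/- Let ω : ℕ → S be an infinite word over a finite set S ⊆ ℤ with bounded additive complexity (i.e., there is M such that any two equal-length factors have sums differing by at most M). Then for every k ≥ 1, ω contains an additive k-power: a factor B₁B₂⋯B_k with |B₁| = ⋯ = |B_k| and ∑B₁ = ⋯ = ∑B_k. -/
lemma factorSum_eq (ω : ℕ → ℤ) (a n : ℕ) :
    factorSum ω a n = factorSum ω 0 (a + n) - factorSum ω 0 a := by
  unfold factorSum
  rw [Finset.sum_range_add]
  simp [add_comm]

/-- A word with bounded additive complexity contains additive `k`-powers for all `k ≥ 1`. -/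
theorem stmt4 (S : Finset ℤ) (ω : ℕ → ℤ) (hω : ∀ n, ω n ∈ S) (M : ℕ)
    (hbd : ∀ a b n : ℕ, |factorSum ω a n - factorSum ω b n| ≤ (M : ℤ)) :
    ∀ k : ℕ, 1 ≤ k → ∃ t s : ℕ, 1 ≤ s ∧
      ∀ i < k, factorSum ω (t + i * s) s = factorSum ω t s := by
  intro k hk
  have : NeZero (M + 1) := ⟨Nat.succ_ne_zero M⟩
  obtain ⟨a, ha, b, c, hc⟩ := Combinatorics.exists_mono_homothetic_copy
    (Finset.range (k + 1)) (fun n : ℕ => ((factorSum ω 0 n : ℤ) : ZMod (M + 1)))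
  refine ⟨b, a, ha, ?_⟩
  intro i hi
  -- colors at b + i*a all equal
  have hcol : ∀ j, j ≤ k →
      ((factorSum ω 0 (b + j * a) : ℤ) : ZMod (M + 1)) = c := by
    intro j hj
    have := hc j (Finset.mem_range.mpr (Nat.lt_succ_of_le hj))
    simpa [smul_eq_mul, add_comm, mul_comm] using this
  have hd : ∀ j, j < k → ((factorSum ω (b + j * a) a : ℤ) : ZMod (M + 1)) = 0 := by
    intro j hj
    rw [factorSum_eq]
    push_cast
    have h1 := hcol (j + 1) hj
    have h2 := hcol j (le_of_lt hj)
    have : b + (j + 1) * a = b + j * a + a := by ring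
    rw [this] at h1
    rw [h1, h2, sub_self]
  have hdi := hd i hi
  have hd0 := hd 0 (lt_of_lt_of_le hk (le_refl k))
  simp only [Nat.zero_mul, Nat.add_zero] at hd0
  -- difference divisible by M+1 and bounded by M
  set x := factorSum ω (b + i * a) a
  set y := factorSum ω b a
  have hdiv : ((M : ℤ) + 1) ∣ (x - y) := by
    have : ((x - y : ℤ) : ZMod (M + 1)) = 0 := by push_cast; rw [hdi, hd0, sub_self]
    have := (ZMod.intCast_zmod_eq_zero_iff_dvd _ _).mp this
    simpa [Nat.cast_add, Nat.cast_one] using this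
  have hbound : |x - y| ≤ (M : ℤ) := hbd _ _ _
  have : x - y = 0 := by
    rcases hdiv with ⟨d, hdv⟩
    by_contra h
    have hd0' : d ≠ 0 := by rintro rfl; simp at hdv; exact h hdv
    have : (M : ℤ) + 1 ≤ |x - y| := by
      rw [hdv, abs_mul]
      have h1 : |(M : ℤ) + 1| = (M : ℤ) + 1 := abs_of_pos (by positivity)
      rw [h1]
      nlinarith [Int.one_le_abs hd0']
    linarith
  linarith
end

section
/- Let ω be an infinite word over a finite set S ⊆ ℤ and M ∈ ℕ such that any two equal-length factors of ω have sums differing by at most M. Define f(n) = (x₁ + ⋯ + x_n) mod (M+1). If t, s ∈ ℕ with s ≥ 1 satisfy f(t) = f(t+s) = ⋯ = f(t+ks), then the consecutive blocks B_i = x_{t+(i−1)s+1}⋯x_{t+is}, 1 ≤ i ≤ k, all have equal length s and equal sums, i.e., B₁⋯B_k is an additive k-power in ω. -/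
/-- Sum of the factor `x_{a+1} ⋯ x_{a+n}` of a word indexed from 1. -/
def factorSum1 (x : ℕ → ℤ) (a n : ℕ) : ℤ := ∑ i ∈ Finset.range n, x (a + i + 1)

lemma factorSum1_eq_prefix (x : ℕ → ℤ) (a n : ℕ) :
    factorSum1 x a n = (∑ i ∈ Finset.range (a + n), x (i + 1))
      - ∑ i ∈ Finset.range a, x (i + 1) := by
  rw [eq_sub_iff_add_eq, factorSum1, add_comm, Finset.sum_range_add]

/-- Monochromatic (for prefix sums mod `M+1`) arithmetic progressions give additive powers. -/
theorem stmt5 (S : Finset ℤ) (x : ℕ → ℤ) (hx : ∀ n, x n ∈ S) (M : ℕ)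
    (hbd : ∀ a b n : ℕ, |factorSum1 x a n - factorSum1 x b n| ≤ (M : ℤ))
    (f : ℕ → ℤ) (hf : ∀ n : ℕ, f n = (∑ i ∈ Finset.range n, x (i + 1)) % ((M : ℤ) + 1))
    (t s k : ℕ) (hs : 1 ≤ s)
    (hmono : ∀ i : ℕ, i ≤ k → f (t + i * s) = f t) :
    ∀ i : ℕ, 1 ≤ i → i ≤ k → factorSum1 x (t + (i - 1) * s) s = factorSum1 x t s := by
  intro i hi hik
  set P : ℕ → ℤ := fun n => ∑ j ∈ Finset.range n, x (j + 1) with hP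
  -- congruence of prefix sums
  have hcong : ∀ j : ℕ, j ≤ k → P (t + j * s) % ((M : ℤ) + 1) = P t % ((M : ℤ) + 1) := by
    intro j hj
    have := hmono j hj
    rw [hf, hf] at this
    simpa using this
  have h1 : P (t + i * s) % ((M : ℤ) + 1) = P (t + (i - 1) * s) % ((M : ℤ) + 1) := by
    rw [hcong i hik, hcong (i - 1) (le_trans (Nat.sub_le i 1) hik)]
  have h2 : P (t + 1 * s) % ((M : ℤ) + 1) = P (t + 0 * s) % ((M : ℤ) + 1) := by
    rw [hcong 1 (le_trans hi hik), hcong 0 (Nat.zero_le k)]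
  -- express block sums
  have hidx : t + (i - 1) * s + s = t + i * s := by
    have : (i - 1) * s + s = i * s := by
      cases i with
      | zero => omega
      | succ n => simp [Nat.succ_sub_one, Nat.succ_mul]
    omega
  have hA : factorSum1 x (t + (i - 1) * s) s = P (t + i * s) - P (t + (i - 1) * s) := by
    rw [factorSum1_eq_prefix, hidx]
  have hB : factorSum1 x t s = P (t + s) - P t := by
    rw [factorSum1_eq_prefix]
  set D : ℤ := factorSum1 x (t + (i - 1) * s) s - factorSum1 x t s with hD
  have hdvd : ((M : ℤ) + 1) ∣ D := by
    have e1 : ((M : ℤ) + 1) ∣ P (t + i * s) - P (t + (i - 1) * s) :=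
      Int.ModEq.dvd (Int.ModEq.symm h1)
    have e2 : ((M : ℤ) + 1) ∣ P (t + s) - P t := by
      have := Int.ModEq.dvd (Int.ModEq.symm h2)
      simpa using this
    have : D = (P (t + i * s) - P (t + (i - 1) * s)) - (P (t + s) - P t) := by
      rw [hD, hA, hB]
    rw [this]
    exact dvd_sub e1 e2
  have habs : |D| ≤ (M : ℤ) := hbd _ _ _
  have hD0 : D = 0 := by
    refine Int.eq_zero_of_abs_lt_dvd hdvd ?_
    omega
  linarith [hD0, hD ▸ hD0]
end

section
/- Let m ≥ 1 and let ω be an infinite word over a finite set S ⊆ ℤᵐ. If there exists M such that for all equal-length factors B₁, B₂ of ω every coordinate of ∑B₁ − ∑B₂ has absolute value at most M, then for every k ≥ 1, ω contains a factor B₁B₂⋯B_k with |B₁| = ⋯ = |B_k| and ∑B₁ = ⋯ = ∑B_k (as vectors in ℤᵐ). -/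
/-- Coordinatewise sum of the length-`n` factor starting at `a` of a `ℤ^m`-valued word. -/
def vFactorSum {m : ℕ} (ω : ℕ → (Fin m → ℤ)) (a n : ℕ) : Fin m → ℤ :=
  ∑ i ∈ Finset.range n, ω (a + i)

lemma vFactorSum_split {m : ℕ} (ω : ℕ → (Fin m → ℤ)) (x n : ℕ) (j : Fin m) :
    vFactorSum ω x n j = vFactorSum ω 0 (x + n) j - vFactorSum ω 0 x j := by
  unfold vFactorSum
  simp only [Finset.sum_apply, zero_add]
  rw [Finset.sum_range_add (fun i => ω i j) x n]
  ring

/-- A `ℤ^m`-valued word with bounded additive complexity contains additive `k`-powers. -/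
theorem stmt6 (m : ℕ) (hm : 1 ≤ m) (S : Finset (Fin m → ℤ)) (ω : ℕ → (Fin m → ℤ))
    (hω : ∀ n, ω n ∈ S) (M : ℕ)
    (hbd : ∀ a b n : ℕ, ∀ j : Fin m,
      |vFactorSum ω a n j - vFactorSum ω b n j| ≤ (M : ℤ)) :
    ∀ k : ℕ, 1 ≤ k → ∃ t s : ℕ, 1 ≤ s ∧
      ∀ i < k, vFactorSum ω (t + i * s) s = vFactorSum ω t s := by
  intro k hk
  classical
  set χ : ℕ → (Fin m → ZMod (M + 1)) :=
    fun n j => ((vFactorSum ω 0 n j : ℤ) : ZMod (M + 1)) with hχ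
  obtain ⟨a, ha, b, c, hc⟩ :=
    Combinatorics.exists_mono_homothetic_copy (Finset.range (k + 1)) χ
  refine ⟨b, a, ha, ?_⟩
  intro i hi
  funext j
  have key : ∀ ℓ, ℓ ≤ k → ((vFactorSum ω 0 (a * ℓ + b) j : ℤ) : ZMod (M + 1)) = c j := by
    intro ℓ hℓ
    have := hc ℓ (Finset.mem_range.mpr (by omega))
    simpa [hχ, smul_eq_mul] using congrFun this j
  set d : ℤ := vFactorSum ω (b + i * a) a j - vFactorSum ω b a j with hd
  have hdvd : ((M : ℤ) + 1) ∣ d := by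
    have h0 : ((d : ℤ) : ZMod (M + 1)) = 0 := by
      have E : d = (vFactorSum ω 0 (b + i * a + a) j - vFactorSum ω 0 (b + i * a) j)
          - (vFactorSum ω 0 (b + a) j - vFactorSum ω 0 b j) := by
        rw [hd, vFactorSum_split ω (b + i * a) a j, vFactorSum_split ω b a j]
      have e1 := key (i + 1) (by omega)
      have e2 := key i (le_of_lt hi)
      have e3 := key 1 hk
      have e4 := key 0 (Nat.zero_le _)
      rw [show a * (i + 1) + b = b + i * a + a by ring] at e1
      rw [show a * i + b = b + i * a by ring] at e2
      rw [show a * 1 + b = b + a by ring] at e3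
      rw [show a * 0 + b = b by ring] at e4
      rw [E]
      push_cast
      rw [e1, e2, e3, e4]
      ring
    have := (ZMod.intCast_zmod_eq_zero_iff_dvd d (M + 1)).mp h0
    exact_mod_cast this
  have habs : |d| ≤ (M : ℤ) := hbd (b + i * a) b a j
  have : d = 0 := Int.eq_zero_of_abs_lt_dvd hdvd (by omega)
  rw [hd] at this
  omega
end

section
/- Let S₁, …, S_m be finite subsets of ℤ and let ω_j be an infinite word on S_j with bounded additive complexity for each j. Then for every k ≥ 1 there exist t ∈ ℕ and s ≥ 1 such that for every j, 1 ≤ j ≤ m, the k consecutive blocks ω_j[t+1, t+s], ω_j[t+s+1, t+2s], …, ω_j[t+(k−1)s+1, t+ks] all have the same sum. That is, the words ω₁, …, ω_m have simultaneous additive k-powers at the same positions. -/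
lemma factorSum_split (ω : ℕ → ℤ) (p q : ℕ) :
    factorSum ω 0 (p + q) = factorSum ω 0 p + factorSum ω p q := by
  simp only [factorSum, Finset.sum_range_add, Nat.zero_add]

/-- Finitely many words each of bounded additive complexity have simultaneous additive
`k`-powers for all `k ≥ 1`. -/
theorem stmt7 (m : ℕ) (S : Fin m → Finset ℤ) (ω : Fin m → ℕ → ℤ)
    (hω : ∀ j n, ω j n ∈ S j)
    (hbd : ∀ j : Fin m, ∃ M : ℕ,
      ∀ a b n : ℕ, |factorSum (ω j) a n - factorSum (ω j) b n| ≤ (M : ℤ)) :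
    ∀ k : ℕ, 1 ≤ k → ∃ t s : ℕ, 1 ≤ s ∧
      ∀ j : Fin m, ∀ i < k, factorSum (ω j) (t + i * s) s = factorSum (ω j) t s := by
  intro k _
  choose M hM using hbd
  -- color n by the tuple of prefix sums mod (M j + 1)
  set C : ℕ → (∀ j : Fin m, ZMod (M j + 1)) :=
    fun n j => ((factorSum (ω j) 0 n : ℤ) : ZMod (M j + 1)) with hC
  obtain ⟨a, ha, b, c, hcol⟩ :=
    Combinatorics.exists_mono_homothetic_copy (Finset.range (k + 1)) C
  refine ⟨b, a, ha, ?_⟩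
  -- every block sum is divisible by M j + 1
  have key : ∀ j : Fin m, ∀ i ≤ k - 1,
      ((M j : ℤ) + 1) ∣ factorSum (ω j) (b + i * a) a := by
    intro j i hi
    have h1 := hcol i (Finset.mem_range.mpr (by omega))
    have h2 := hcol (i + 1) (Finset.mem_range.mpr (by omega))
    simp only [smul_eq_mul] at h1 h2
    have h3 : C (a * (i + 1) + b) j = C (a * i + b) j := by rw [h1, h2]
    have hsplit : factorSum (ω j) 0 (a * (i + 1) + b)
        = factorSum (ω j) 0 (a * i + b) + factorSum (ω j) (a * i + b) a := by
      have := factorSum_split (ω j) (a * i + b) a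
      rw [← this]; ring_nf
    have h4 : (((factorSum (ω j) (a * i + b) a : ℤ)) : ZMod (M j + 1)) = 0 := by
      have := h3
      simp only [hC, hsplit, Int.cast_add] at this
      linear_combination this
    have h5 : ((M j + 1 : ℕ) : ℤ) ∣ factorSum (ω j) (a * i + b) a :=
      (ZMod.intCast_zmod_eq_zero_iff_dvd _ _).mp h4
    have : a * i + b = b + i * a := by ring
    rw [this] at h5
    exact_mod_cast h5
  intro j i hi
  have hib : i ≤ k - 1 := by omega
  have h0 : ((M j : ℤ) + 1) ∣ factorSum (ω j) (b + i * a) a := key j i hib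
  have h00 : ((M j : ℤ) + 1) ∣ factorSum (ω j) (b + 0 * a) a := key j 0 (by omega)
  simp only [Nat.zero_mul, Nat.add_zero] at h00
  have hdvd : ((M j : ℤ) + 1) ∣ factorSum (ω j) (b + i * a) a - factorSum (ω j) b a :=
    dvd_sub h0 h00
  have habs := hM j (b + i * a) b a
  have : factorSum (ω j) (b + i * a) a - factorSum (ω j) b a = 0 := by
    refine Int.eq_zero_of_abs_lt_dvd hdvd ?_
    have : (0:ℤ) ≤ M j := Int.natCast_nonneg _
    omega
  omega
end

section
/- Let ω be an infinite word over a finite alphabet A of size t. If there exists M₁ such that for every adjacent factor pair B₁B₂ of ω with |B₁| = |B₂| the Parikh vectors satisfy |ψ(B₁) − ψ(B₂)| ≤ M₁ componentwise, then there exists M₂ (e.g., M₂ = 2M₁ + 2) such that for all (not necessarily adjacent) equal-length factors B₁, B₂ of ω, |ψ(B₁) − ψ(B₂)| ≤ M₂ componentwise. -/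
/-- The Parikh vector of the length-`n` factor of `ω` starting at position `a`:
coordinate `c` counts occurrences of the letter `c`. -/
def parikh {t : ℕ} (ω : ℕ → Fin t) (a n : ℕ) : Fin t → ℕ :=
  fun c => ((Finset.range n).filter (fun i => ω (a + i) = c)).card

lemma parikh_succ {t : ℕ} (ω : ℕ → Fin t) (a n : ℕ) (c : Fin t) :
    parikh ω a (n + 1) c = parikh ω a n c + (if ω (a + n) = c then 1 else 0) := by
  simp only [parikh, Finset.range_add_one, Finset.filter_insert]
  split_ifs with h
  · rw [Finset.card_insert_of_notMem (by simp)]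
  · simp

lemma parikh_one {t : ℕ} (ω : ℕ → Fin t) (a : ℕ) (c : Fin t) :
    parikh ω a 1 c = (if ω a = c then 1 else 0) := by
  have := parikh_succ ω a 0 c
  simpa [parikh] using this

lemma parikh_add {t : ℕ} (ω : ℕ → Fin t) (a m n : ℕ) (c : Fin t) :
    parikh ω a (m + n) c = parikh ω a m c + parikh ω (a + m) n c := by
  induction n with
  | zero => simp [parikh]
  | succ n ih =>
    have h1 : m + (n + 1) = (m + n) + 1 := rfl
    rw [h1, parikh_succ, ih, parikh_succ]
    have h2 : a + (m + n) = a + m + n := by omega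
    rw [h2, add_assoc]

lemma parikh_slide1 {t : ℕ} (ω : ℕ → Fin t) (a n : ℕ) (c : Fin t) :
    |(parikh ω a n c : ℤ) - (parikh ω (a + 1) n c : ℤ)| ≤ 1 := by
  have h1 := parikh_succ ω a n c
  have h2 : parikh ω a (1 + n) c = parikh ω a 1 c + parikh ω (a + 1) n c :=
    parikh_add ω a 1 n c
  rw [add_comm 1 n, h1, parikh_one] at h2
  have h3 : (parikh ω a n c : ℤ) - (parikh ω (a + 1) n c : ℤ)
      = (if ω a = c then (1:ℤ) else 0) - (if ω (a + n) = c then (1:ℤ) else 0) := by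
    have := congrArg (fun x : ℕ => (x : ℤ)) h2
    push_cast at this
    split_ifs at this ⊢ <;> omega
  rw [h3]; split_ifs <;> simp

lemma parikh_slide {t : ℕ} (ω : ℕ → Fin t) (a n : ℕ) (c : Fin t) (d : ℕ) :
    |(parikh ω a n c : ℤ) - (parikh ω (a + d) n c : ℤ)| ≤ d := by
  induction d with
  | zero => simp
  | succ d ih =>
    have h1 := parikh_slide1 ω (a + d) n c
    have h2 : a + (d + 1) = (a + d) + 1 := by omega
    rw [h2]
    calc |(parikh ω a n c : ℤ) - (parikh ω (a + d + 1) n c : ℤ)|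
        ≤ |(parikh ω a n c : ℤ) - (parikh ω (a + d) n c : ℤ)|
          + |(parikh ω (a + d) n c : ℤ) - (parikh ω (a + d + 1) n c : ℤ)| := by
          apply abs_sub_le
      _ ≤ d + 1 := by exact add_le_add ih h1

lemma parikh_dist {t : ℕ} (ω : ℕ → Fin t) (a b n : ℕ) (c : Fin t) :
    |(parikh ω a n c : ℤ) - (parikh ω b n c : ℤ)| ≤ Nat.dist a b := by
  rcases le_total a b with h | h
  · have hdist : Nat.dist a b = b - a := Nat.dist_eq_sub_of_le h
    have hs := parikh_slide ω a n c (b - a)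
    rw [show a + (b - a) = b by omega] at hs
    rw [hdist]; exact hs
  · have hdist : Nat.dist a b = a - b := by rw [Nat.dist_comm]; exact Nat.dist_eq_sub_of_le h
    have hs := parikh_slide ω b n c (a - b)
    rw [show b + (a - b) = a by omega] at hs
    rw [abs_sub_comm, hdist]; exact hs

lemma parikh_doub {t : ℕ} (ω : ℕ → Fin t) (M₁ : ℕ)
    (hadj : ∀ a n : ℕ, ∀ c : Fin t,
      |(parikh ω a n c : ℤ) - (parikh ω (a + n) n c : ℤ)| ≤ (M₁ : ℤ))
    (a n : ℕ) (c : Fin t) (k : ℕ) :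
    |(2:ℤ)^k * (parikh ω a n c : ℤ) - (parikh ω a (2^k * n) c : ℤ)|
      ≤ ((2:ℤ)^k - 1) * M₁ := by
  induction k with
  | zero => simp
  | succ k ih =>
    have h2 : 2^(k+1) * n = 2^k * n + 2^k * n := by ring
    rw [h2, parikh_add]
    push_cast
    set P : ℤ := (parikh ω a n c : ℤ)
    set A : ℤ := (parikh ω a (2^k * n) c : ℤ)
    set B : ℤ := (parikh ω (a + 2^k * n) (2^k * n) c : ℤ)
    have hAB : |A - B| ≤ (M₁ : ℤ) := hadj a (2^k * n) c
    have key : (2:ℤ)^(k+1) * P - (A + B)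
        = 2 * ((2:ℤ)^k * P - A) + (A - B) := by ring
    rw [key]
    calc |2 * ((2:ℤ)^k * P - A) + (A - B)|
        ≤ |2 * ((2:ℤ)^k * P - A)| + |A - B| := abs_add_le _ _
      _ = 2 * |(2:ℤ)^k * P - A| + |A - B| := by rw [abs_mul]; norm_num
      _ ≤ 2 * (((2:ℤ)^k - 1) * M₁) + M₁ := by
          have h2' := mul_le_mul_of_nonneg_left ih (by norm_num : (0:ℤ) ≤ 2)
          linarith
      _ = ((2:ℤ)^(k+1) - 1) * M₁ := by ring

/-- If Parikh vectors of adjacent equal-length factors differ by at most `M₁` componentwise,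
then Parikh vectors of arbitrary equal-length factors differ by at most `2M₁ + 2`. -/
theorem stmt8 (t : ℕ) (ω : ℕ → Fin t) (M₁ : ℕ)
    (hadj : ∀ a n : ℕ, ∀ c : Fin t,
      |(parikh ω a n c : ℤ) - (parikh ω (a + n) n c : ℤ)| ≤ (M₁ : ℤ)) :
    ∀ a b n : ℕ, ∀ c : Fin t,
      |(parikh ω a n c : ℤ) - (parikh ω b n c : ℤ)| ≤ 2 * (M₁ : ℤ) + 2 := by
  intro a b n c
  set d : ℕ := Nat.dist a b with hd
  set k : ℕ := d
  have hdk : (d : ℤ) ≤ 2^k := by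
    have := Nat.lt_two_pow_self (n := d)
    exact_mod_cast this.le
  have ha := parikh_doub ω M₁ hadj a n c k
  have hb := parikh_doub ω M₁ hadj b n c k
  have hmid := parikh_dist ω a b (2^k * n) c
  set Pa : ℤ := (parikh ω a n c : ℤ)
  set Pb : ℤ := (parikh ω b n c : ℤ)
  set Fa : ℤ := (parikh ω a (2^k * n) c : ℤ)
  set Fb : ℤ := (parikh ω b (2^k * n) c : ℤ)
  have key : (2:ℤ)^k * |Pa - Pb| ≤ 2^k * (2 * M₁ + 2) := by
    have h1 : (2:ℤ)^k * |Pa - Pb| = |2^k * Pa - 2^k * Pb| := by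
      rw [← mul_sub, abs_mul]
      norm_num
    rw [h1]
    calc |(2:ℤ)^k * Pa - 2^k * Pb|
        = |((2:ℤ)^k * Pa - Fa) + (Fa - Fb) + (Fb - 2^k * Pb)| := by ring_nf
      _ ≤ |(2:ℤ)^k * Pa - Fa| + |Fa - Fb| + |Fb - 2^k * Pb| := by
          exact (abs_add_le _ _).trans (by gcongr; exact abs_add_le _ _)
      _ ≤ ((2:ℤ)^k - 1) * M₁ + d + ((2:ℤ)^k - 1) * M₁ := by
          have hb' : |Fb - 2^k * Pb| = |2^k * Pb - Fb| := abs_sub_comm _ _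
          rw [hb']
          exact add_le_add (add_le_add ha hmid) hb
      _ ≤ 2^k * (2 * M₁ + 2) := by
          have hM : (0:ℤ) ≤ M₁ := Int.natCast_nonneg _
          have h2k : (0:ℤ) < 2^k := by positivity
          nlinarith
  have h2kpos : (0:ℤ) < 2^k := by positivity
  exact le_of_mul_le_mul_left key h2kpos
end

section
/- Let σ be Dekking's binary infinite word containing no abelian 4th power, and let τ be obtained from σ by replacing every letter 1 by the block 12 and every letter 0 by the block 03. Then τ contains no abelian 4th power (in particular τ does not have every abelian power), yet τ has bounded additive complexity: |φ_τ(n)| ≤ 4 for all n ≥ 1. -/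
def parikhC (ω : ℕ → ℕ) (a n : ℕ) : ℕ → ℕ :=
  fun c => ((Finset.range n).filter (fun i => ω (a + i) = c)).card

def factorSumN (ω : ℕ → ℕ) (a n : ℕ) : ℕ := ∑ i ∈ Finset.range n, ω (a + i)

def phiSetN (ω : ℕ → ℕ) (n : ℕ) : Set ℕ := {s | ∃ a : ℕ, factorSumN ω a n = s}

lemma parikhC_eq_sum (ω : ℕ → ℕ) (a n c : ℕ) :
    parikhC ω a n c = ∑ i ∈ Finset.range n, if ω (a + i) = c then 1 else 0 := by
  unfold parikhC
  rw [Finset.card_filter]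

section aux

variable {σ τ : ℕ → ℕ}

lemma tau_even (hτ : ∀ n : ℕ, τ n =
      if n % 2 = 0 then (if σ (n / 2) = 1 then 1 else 0)
      else (if σ (n / 2) = 1 then 2 else 3)) (k : ℕ) :
    τ (2 * k) = if σ k = 1 then 1 else 0 := by
  rw [hτ, show (2 * k) % 2 = 0 from by omega, show (2 * k) / 2 = k from by omega]
  simp

lemma tau_odd (hτ : ∀ n : ℕ, τ n =
      if n % 2 = 0 then (if σ (n / 2) = 1 then 1 else 0)
      else (if σ (n / 2) = 1 then 2 else 3)) (k : ℕ) :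
    τ (2 * k + 1) = if σ k = 1 then 2 else 3 := by
  rw [hτ, show (2 * k + 1) % 2 = 1 from by omega, show (2 * k + 1) / 2 = k from by omega]
  simp

lemma tau_even_le (hτ : ∀ n : ℕ, τ n =
      if n % 2 = 0 then (if σ (n / 2) = 1 then 1 else 0)
      else (if σ (n / 2) = 1 then 2 else 3)) (k : ℕ) : τ (2 * k) ≤ 1 := by
  rw [tau_even hτ]; split <;> omega

lemma tau_odd_bd (hτ : ∀ n : ℕ, τ n =
      if n % 2 = 0 then (if σ (n / 2) = 1 then 1 else 0)
      else (if σ (n / 2) = 1 then 2 else 3)) (k : ℕ) :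
    2 ≤ τ (2 * k + 1) ∧ τ (2 * k + 1) ≤ 3 := by
  rw [tau_odd hτ]; split <;> omega

lemma tau_pair (hτ : ∀ n : ℕ, τ n =
      if n % 2 = 0 then (if σ (n / 2) = 1 then 1 else 0)
      else (if σ (n / 2) = 1 then 2 else 3)) (k : ℕ) :
    τ (2 * k) + τ (2 * k + 1) = 3 := by
  rw [tau_even hτ, tau_odd hτ]; split <;> omega

/-- sum of a factor starting at an even position, of even length -/
lemma sum_even_even (hτ : ∀ n : ℕ, τ n =
      if n % 2 = 0 then (if σ (n / 2) = 1 then 1 else 0)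
      else (if σ (n / 2) = 1 then 2 else 3)) (m v : ℕ) :
    factorSumN τ (2 * v) (2 * m) = 3 * m := by
  induction m with
  | zero => simp [factorSumN]
  | succ m ih =>
    have h2 : 2 * (m + 1) = 2 * m + 1 + 1 := by ring
    rw [factorSumN, h2, Finset.sum_range_succ, Finset.sum_range_succ, ← factorSumN, ih]
    have e1 : 2 * v + 2 * m = 2 * (v + m) := by ring
    have e2 : 2 * v + (2 * m + 1) = 2 * (v + m) + 1 := by ring
    rw [e1, e2]
    have := tau_pair hτ (v + m)
    omega

/-- peel off the first letter -/
lemma sum_peel_first (ω : ℕ → ℕ) (a k : ℕ) :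
    factorSumN ω a (k + 1) = ω a + factorSumN ω (a + 1) k := by
  rw [factorSumN, Finset.sum_range_succ', factorSumN]
  have : ∀ i, ω (a + (i + 1)) = ω (a + 1 + i) := fun i => by ring_nf
  simp only [this, Nat.add_zero]
  omega

lemma sum_peel_last (ω : ℕ → ℕ) (a k : ℕ) :
    factorSumN ω a (k + 1) = factorSumN ω a k + ω (a + k) := by
  rw [factorSumN, Finset.sum_range_succ, factorSumN]

lemma sum_bounds_even (hτ : ∀ n : ℕ, τ n =
      if n % 2 = 0 then (if σ (n / 2) = 1 then 1 else 0)
      else (if σ (n / 2) = 1 then 2 else 3)) (m : ℕ) (hm : 1 ≤ m) (a : ℕ) :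
    3 * m - 1 ≤ factorSumN τ a (2 * m) ∧ factorSumN τ a (2 * m) ≤ 3 * m + 1 := by
  rcases Nat.even_or_odd a with ⟨v, hv⟩ | ⟨v, hv⟩
  · subst hv
    rw [show v + v = 2 * v from by ring, sum_even_even hτ]
    omega
  · subst hv
    obtain ⟨m', rfl⟩ : ∃ m', m = m' + 1 := ⟨m - 1, by omega⟩
    rw [show 2 * (m' + 1) = (2 * m' + 1) + 1 from by ring, sum_peel_first,
      show 2 * v + 1 + 1 = 2 * (v + 1) from by ring, sum_peel_last, sum_even_even hτ,
      show 2 * (v + 1) + 2 * m' = 2 * (v + 1 + m') from by ring]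
    have h1 := tau_odd_bd hτ v
    have h2 := tau_even_le hτ (v + 1 + m')
    omega

lemma sum_bounds_odd (hτ : ∀ n : ℕ, τ n =
      if n % 2 = 0 then (if σ (n / 2) = 1 then 1 else 0)
      else (if σ (n / 2) = 1 then 2 else 3)) (m a : ℕ) :
    3 * m ≤ factorSumN τ a (2 * m + 1) ∧ factorSumN τ a (2 * m + 1) ≤ 3 * m + 3 := by
  rcases Nat.even_or_odd a with ⟨v, hv⟩ | ⟨v, hv⟩
  · subst hv
    rw [show v + v = 2 * v from by ring, sum_peel_last, sum_even_even hτ,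
      show 2 * v + 2 * m = 2 * (v + m) from by ring]
    have h2 := tau_even_le hτ (v + m)
    omega
  · subst hv
    rw [show 2 * m + 1 = 2 * m + 1 from rfl, sum_peel_first,
      show 2 * v + 1 + 1 = 2 * (v + 1) from by ring, sum_even_even hτ]
    have h1 := tau_odd_bd hτ v
    omega

/-- the number of 1's in a τ-window of even length equals the number of 1's in the
corresponding σ-window -/
lemma count_ones (hτ : ∀ n : ℕ, τ n =
      if n % 2 = 0 then (if σ (n / 2) = 1 then 1 else 0)
      else (if σ (n / 2) = 1 then 2 else 3)) (u : ℕ) : ∀ a : ℕ,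
    (∑ i ∈ Finset.range (2 * u), if τ (a + i) = 1 then (1 : ℕ) else 0)
      = ∑ j ∈ Finset.range u, if σ ((a + 1) / 2 + j) = 1 then (1 : ℕ) else 0 := by
  induction u with
  | zero => simp
  | succ u ih =>
    intro a
    rw [show 2 * (u + 1) = 2 * u + 1 + 1 from by ring, Finset.sum_range_succ,
      Finset.sum_range_succ, ih a, Finset.sum_range_succ]
    rcases Nat.mod_two_eq_zero_or_one a with ha | ha
    · rw [show a + 2 * u = 2 * ((a + 1) / 2 + u) from by omega,
        show a + (2 * u + 1) = 2 * ((a + 1) / 2 + u) + 1 from by omega,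
        tau_even hτ, tau_odd hτ]
      by_cases hs : σ ((a + 1) / 2 + u) = 1 <;> simp [hs]
    · rw [show a + 2 * u = 2 * (a / 2 + u) + 1 from by omega,
        show a + (2 * u + 1) = 2 * ((a + 1) / 2 + u) from by omega,
        tau_odd hτ, tau_even hτ]
      by_cases hs : σ ((a + 1) / 2 + u) = 1
      · by_cases hs2 : σ (a / 2 + u) = 1 <;> simp [hs, hs2]
      · by_cases hs2 : σ (a / 2 + u) = 1 <;> simp [hs, hs2]

/-- letters 0 and 1 of τ occur exactly at even positions -/
lemma evens_count (hσbin : ∀ n, σ n = 0 ∨ σ n = 1) (hτ : ∀ n : ℕ, τ n =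
      if n % 2 = 0 then (if σ (n / 2) = 1 then 1 else 0)
      else (if σ (n / 2) = 1 then 2 else 3)) (a s : ℕ) :
    parikhC τ a s 0 + parikhC τ a s 1
      = ∑ i ∈ Finset.range s, if (a + i) % 2 = 0 then (1 : ℕ) else 0 := by
  rw [parikhC_eq_sum, parikhC_eq_sum, ← Finset.sum_add_distrib]
  refine Finset.sum_congr rfl (fun i _ => ?_)
  rw [hτ]
  rcases Nat.mod_two_eq_zero_or_one (a + i) with h | h <;>
    rcases hσbin ((a + i) / 2) with h2 | h2 <;> simp [h, h2]

lemma evens_total (a : ℕ) : ∀ u : ℕ,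
    (∑ i ∈ Finset.range (2 * u), if (a + i) % 2 = 0 then (1 : ℕ) else 0) = u := by
  intro u
  induction u with
  | zero => simp
  | succ u ih =>
    rw [show 2 * (u + 1) = 2 * u + 1 + 1 from by ring, Finset.sum_range_succ,
      Finset.sum_range_succ, ih]
    split_ifs <;> omega

lemma bin_count (hσbin : ∀ n, σ n = 0 ∨ σ n = 1) (a u : ℕ) :
    (∑ j ∈ Finset.range u, if σ (a + j) = 0 then (1 : ℕ) else 0)
      + (∑ j ∈ Finset.range u, if σ (a + j) = 1 then (1 : ℕ) else 0) = u := by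
  rw [← Finset.sum_add_distrib]
  have : ∀ j ∈ Finset.range u,
      ((if σ (a + j) = 0 then (1 : ℕ) else 0) + if σ (a + j) = 1 then (1 : ℕ) else 0) = 1 := by
    intro j _
    rcases hσbin (a + j) with h | h <;> simp [h]
  rw [Finset.sum_congr rfl this]
  simp

end aux

/-- If `σ` is a binary word with no abelian 4th power (Dekking's word), and `τ` is obtained
from `σ` by `1 ↦ 12`, `0 ↦ 03`, then `τ` has no abelian 4th power, yet `|φ_τ(n)| ≤ 4`
for all `n ≥ 1`. -/
theorem stmt16 (σ : ℕ → ℕ) (hσbin : ∀ n, σ n = 0 ∨ σ n = 1)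
    (hσ : ¬ ∃ t s : ℕ, 1 ≤ s ∧ ∀ i < 4, parikhC σ (t + i * s) s = parikhC σ t s)
    (τ : ℕ → ℕ)
    (hτ : ∀ n : ℕ, τ n =
      if n % 2 = 0 then (if σ (n / 2) = 1 then 1 else 0)
      else (if σ (n / 2) = 1 then 2 else 3)) :
    (¬ ∃ t s : ℕ, 1 ≤ s ∧ ∀ i < 4, parikhC τ (t + i * s) s = parikhC τ t s) ∧
    (∀ n : ℕ, 1 ≤ n → (phiSetN τ n).ncard ≤ 4) := by
  constructor
  · rintro ⟨t, s, hs1, hpow⟩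
    rcases Nat.mod_two_eq_zero_or_one s with hs | hs
    · -- s even : transfer the abelian 4th power to σ
      obtain ⟨u, rfl⟩ : ∃ u, s = 2 * u := ⟨s / 2, by omega⟩
      have hu1 : 1 ≤ u := by omega
      apply hσ
      refine ⟨(t + 1) / 2, u, hu1, ?_⟩
      intro i hi
      have hp := hpow i hi
      -- counts of letter 1
      have h1 := congrFun hp 1
      rw [parikhC_eq_sum, parikhC_eq_sum, count_ones hτ u, count_ones hτ u] at h1
      rw [show (t + i * (2 * u) + 1) / 2 = (t + 1) / 2 + i * u from by
        rw [show i * (2 * u) = 2 * (i * u) from by ring]; omega] at h1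
      funext c
      have hb1 := bin_count hσbin ((t + 1) / 2 + i * u) u
      have hb2 := bin_count hσbin ((t + 1) / 2) u
      match c with
      | 0 =>
        rw [parikhC_eq_sum, parikhC_eq_sum]
        omega
      | 1 =>
        rw [parikhC_eq_sum, parikhC_eq_sum]
        omega
      | (k + 2) =>
        rw [parikhC_eq_sum, parikhC_eq_sum, Finset.sum_eq_zero, Finset.sum_eq_zero]
        · intro j _
          rcases hσbin ((t + 1) / 2 + j) with h | h <;> rw [h, if_neg (by omega)]
        · intro j _
          rcases hσbin ((t + 1) / 2 + i * u + j) with h | h <;> rw [h, if_neg (by omega)]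
    · -- s odd : already two consecutive blocks cannot be abelian equivalent
      have hp := hpow 1 (by norm_num)
      have h0 := congrFun hp 0
      have h1 := congrFun hp 1
      have e1 := evens_count hσbin hτ t s
      have e2 := evens_count hσbin hτ (t + 1 * s) s
      have etot : (∑ i ∈ Finset.range s, if (t + i) % 2 = 0 then (1 : ℕ) else 0)
          + (∑ i ∈ Finset.range s, if (t + 1 * s + i) % 2 = 0 then (1 : ℕ) else 0) = s := by
        have hadd := Finset.sum_range_add
          (fun i => if (t + i) % 2 = 0 then (1 : ℕ) else 0) s s
        have : ∀ i, ((if (t + (s + i)) % 2 = 0 then (1 : ℕ) else 0)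
            = if (t + 1 * s + i) % 2 = 0 then (1 : ℕ) else 0) := by
          intro i
          rw [show t + (s + i) = t + 1 * s + i from by ring]
        simp only [this] at hadd
        rw [← hadd, show s + s = 2 * s from by ring, evens_total]
      omega
  · -- bounded additive complexity
    intro n hn
    rcases Nat.even_or_odd n with ⟨m, hm⟩ | ⟨m, hm⟩
    · -- n = 2m even, sums lie in [3m-1, 3m+1]
      have hm1 : 1 ≤ m := by omega
      have hsub : phiSetN τ n ⊆ ↑(Finset.Icc (3 * m - 1) (3 * m + 1)) := by
        rintro x ⟨a, rfl⟩
        simp only [Finset.coe_Icc, Set.mem_Icc]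
        rw [hm, show m + m = 2 * m from by ring]
        exact sum_bounds_even hτ m hm1 a
      calc (phiSetN τ n).ncard ≤ (↑(Finset.Icc (3 * m - 1) (3 * m + 1)) : Set ℕ).ncard :=
            Set.ncard_le_ncard hsub (Finset.Icc _ _).finite_toSet
        _ = (Finset.Icc (3 * m - 1) (3 * m + 1)).card := Set.ncard_coe_finset _
        _ ≤ 4 := by rw [Nat.card_Icc]; omega
    · -- n = 2m+1 odd, sums lie in [3m, 3m+3]
      have hsub : phiSetN τ n ⊆ ↑(Finset.Icc (3 * m) (3 * m + 3)) := by
        rintro x ⟨a, rfl⟩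
        simp only [Finset.coe_Icc, Set.mem_Icc]
        rw [hm]
        exact sum_bounds_odd hτ m a
      calc (phiSetN τ n).ncard ≤ (↑(Finset.Icc (3 * m) (3 * m + 3)) : Set ℕ).ncard :=
            Set.ncard_le_ncard hsub (Finset.Icc _ _).finite_toSet
        _ = (Finset.Icc (3 * m) (3 * m + 3)).card := Set.ncard_coe_finset _
        _ ≤ 4 := by rw [Nat.card_Icc]; omega
end

section
/- Let S be a finite set, S⁺ the free semigroup on S, and μ : S⁺ → ℤᵗ a morphism (μ(B₁B₂) = μ(B₁) + μ(B₂)). Let ω be an infinite word on S and suppose there exists M such that for all equal-length factors B₁, B₂ of ω, ‖μ(B₁) − μ(B₂)‖ ≤ M (Euclidean norm). Then for every k ≥ 1, ω has a factor B₁B₂⋯B_k with |B₁| = ⋯ = |B_k| and μ(B₁) = ⋯ = μ(B_k). -/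
/-- The value of the morphism `μ` (determined by its values `μ₀` on letters) on the
length-`n` factor of `ω` starting at `a`. -/
def muFactor {S : Type*} {t : ℕ} (μ₀ : S → (Fin t → ℤ)) (ω : ℕ → S) (a n : ℕ) :
    Fin t → ℤ := ∑ i ∈ Finset.range n, μ₀ (ω (a + i))

lemma muFactor_eq {S : Type*} {t : ℕ} (μ₀ : S → (Fin t → ℤ)) (ω : ℕ → S) (a n : ℕ) :
    muFactor μ₀ ω a n = muFactor μ₀ ω 0 (a + n) - muFactor μ₀ ω 0 a := by
  unfold muFactor
  rw [Finset.sum_range_add]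
  simp

/-- If the values of a morphism `μ : S⁺ → ℤᵗ` on equal-length factors of `ω` differ by at
most `M` in Euclidean norm, then `ω` contains `k`-powers modulo `μ` for every `k ≥ 1`. -/
theorem stmt17 (S : Type*) [Fintype S] (t : ℕ) (μ₀ : S → (Fin t → ℤ))
    (ω : ℕ → S) (M : ℕ)
    (hbd : ∀ a b n : ℕ,
      Real.sqrt (∑ j : Fin t, ((muFactor μ₀ ω a n j - muFactor μ₀ ω b n j : ℤ) : ℝ) ^ 2)
        ≤ (M : ℝ)) :
    ∀ k : ℕ, 1 ≤ k → ∃ a s : ℕ, 1 ≤ s ∧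
      ∀ i < k, muFactor μ₀ ω (a + i * s) s = muFactor μ₀ ω a s := by
  intro k hk
  -- coordinatewise bound on differences of equal-length factors
  have hcoord : ∀ a b n : ℕ, ∀ j : Fin t,
      |muFactor μ₀ ω a n j - muFactor μ₀ ω b n j| ≤ (M : ℤ) := by
    intro a b n j
    have h1 : ((muFactor μ₀ ω a n j - muFactor μ₀ ω b n j : ℤ) : ℝ) ^ 2
        ≤ ∑ j : Fin t, ((muFactor μ₀ ω a n j - muFactor μ₀ ω b n j : ℤ) : ℝ) ^ 2 :=
      Finset.single_le_sum
        (f := fun i => ((muFactor μ₀ ω a n i - muFactor μ₀ ω b n i : ℤ) : ℝ) ^ 2)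
        (fun i _ => sq_nonneg _) (Finset.mem_univ j)
    have h2 : |((muFactor μ₀ ω a n j - muFactor μ₀ ω b n j : ℤ) : ℝ)| ≤ (M : ℝ) := by
      have := (Real.sqrt_le_sqrt h1).trans (hbd a b n)
      rwa [Real.sqrt_sq_eq_abs] at this
    rw [← Int.cast_abs] at h2
    exact_mod_cast h2
  -- coloring by prefix values mod M+1
  let C : ℕ → (Fin t → ZMod (M + 1)) := fun n j => ((muFactor μ₀ ω 0 n j : ℤ) : ZMod (M + 1))
  obtain ⟨s, hs, b, c, hmono⟩ :=
    Combinatorics.exists_mono_homothetic_copy (Finset.range (k + 1)) C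
  refine ⟨b, s, hs, ?_⟩
  intro i hi
  -- congruence of prefix colors along the AP
  have hC : ∀ m, m ≤ k → C (b + m * s) = c := by
    intro m hm
    have := hmono m (Finset.mem_range.mpr (Nat.lt_succ_of_le hm))
    simpa [smul_eq_mul, mul_comm, add_comm] using this
  funext j
  set d : ℤ := muFactor μ₀ ω (b + i * s) s j - muFactor μ₀ ω b s j with hd
  have hdvd : ((M : ℤ) + 1) ∣ d := by
    have h0 := hC 0 (Nat.zero_le _)
    have h1 := hC 1 hk
    have hi1 := hC i (le_of_lt hi)
    have hi2 := hC (i + 1) hi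
    have : ((d : ℤ) : ZMod (M + 1)) = 0 := by
      have e1 := congrFun (h1.trans h0.symm) j
      have e2 := congrFun (hi2.trans hi1.symm) j
      rw [hd, muFactor_eq μ₀ ω (b + i * s) s, muFactor_eq μ₀ ω b s]
      simp only [C, Nat.zero_mul, Nat.add_zero] at e1 e2
      rw [show b + 1 * s = b + s by ring] at e1
      have hix : b + i * s + s = b + (i + 1) * s := by ring
      simp only [Pi.sub_apply, hix]
      push_cast
      rw [e2, e1]
      ring
    rwa [ZMod.intCast_zmod_eq_zero_iff_dvd, Nat.cast_add, Nat.cast_one] at this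
  have habs : |d| < (M : ℤ) + 1 := lt_of_le_of_lt (hcoord _ _ _ j) (by omega)
  have : d = 0 := Int.eq_zero_of_abs_lt_dvd hdvd habs
  omega
end
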